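/- Let ω ∈ ℂ be a primitive third root of unity. Let V be a 4-dimensional ℂ-vector space and let f be an endomorphism of V whose matrix in some basis of V is diag(J(ω,3), J(1,1)). Then there is a basis of the 6-dimensional space ⋀²V in which the induced endomorphism ⋀²f has matrix diag(J(ω,3), J(ω⁻¹,3)). -/

import Mathlib

/-- The `n × n` Jordan block with eigenvalue `lam`: every diagonal entry is `lam` and every
entry directly above the diagonal is `1`. -/
def jordanBlock (lam : ℂ) (n : ℕ) : Matrix (Fin n) (Fin n) ℂ :=
  Matrix.of fun i j : Fin n =>
    if (j : ℕ) = (i : ℕ) then lam else if (j : ℕ) = (i : ℕ) + 1 then 1 else 0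

/-- The wedge `v ∧ w` as an element of the second exterior power `⋀[ℂ]^2 V`. -/
def wedge {V : Type*} [AddCommGroup V] [Module ℂ V] (v w : V) : ⋀[ℂ]^2 V :=
  ⟨ExteriorAlgebra.ι ℂ v * ExteriorAlgebra.ι ℂ w, by
    show _ ∈ LinearMap.range (ExteriorAlgebra.ι ℂ (M := V)) ^ 2
    rw [pow_two]
    exact Submodule.mul_mem_mul (LinearMap.mem_range_self _ v) (LinearMap.mem_range_self _ w)⟩

/-!
Write `e₀, e₁, e₂, e₃` for the basis `B`. Since `e₃` is fixed by `f`, the wedges `eᵢ ∧ e₃`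
(`i < 3`) form a Jordan chain of `⋀²f` for `ω`, and `ω³ e₀∧e₁, ω² e₀∧e₂, ω e₁∧e₂ - e₀∧e₂` form
one for `ω² = ω⁻¹`. Evaluating the coordinate 2-forms of `B` shows that these six vectors are
linearly independent, and `dim ⋀²V = (4 choose 2) = 6` makes them a basis.
-/

section JordanChain

variable {M : Type*} [AddCommGroup M] [Module ℂ M]

def IsJordanChain (g : M →ₗ[ℂ] M) (a : ℂ) {n : ℕ} (v : Fin n → M) : Prop :=
  ∀ j, g (v j) = ∑ i, jordanBlock a n i j • v i

theorem isJordanChain_one_iff (g : M →ₗ[ℂ] M) (a : ℂ) (v : Fin 1 → M) :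
    IsJordanChain g a v ↔ g (v 0) = a • v 0 := by
  simp [IsJordanChain, Fin.forall_fin_one, jordanBlock]

theorem isJordanChain_three_iff (g : M →ₗ[ℂ] M) (a : ℂ) (v : Fin 3 → M) :
    IsJordanChain g a v ↔
      g (v 0) = a • v 0 ∧ g (v 1) = v 0 + a • v 1 ∧ g (v 2) = v 1 + a • v 2 := by
  simp [IsJordanChain, Fin.forall_fin_succ, Fin.sum_univ_three, jordanBlock]

theorem LinearMap.toMatrix_eq_iff {ι : Type*} [Fintype ι] [DecidableEq ι]
    (C : Module.Basis ι ℂ M) (g : M →ₗ[ℂ] M) (A : Matrix ι ι ℂ) :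
    LinearMap.toMatrix C C g = A ↔ ∀ j, g (C j) = ∑ i, A i j • C i := by
  rw [← (LinearMap.toMatrix C C).symm.injective.eq_iff, LinearEquiv.symm_apply_apply,
    LinearMap.toMatrix_symm]
  refine ⟨fun h j => by rw [h, Matrix.toLin_self], fun h => C.ext fun j => ?_⟩
  rw [h, Matrix.toLin_self]

theorem LinearMap.toMatrix_eq_fromBlocks_jordanBlock_iff {m n : ℕ}
    (C : Module.Basis (Fin m ⊕ Fin n) ℂ M) (g : M →ₗ[ℂ] M) (a b : ℂ) :
    LinearMap.toMatrix C C g = Matrix.fromBlocks (jordanBlock a m) 0 0 (jordanBlock b n) ↔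
      IsJordanChain g a (C ∘ Sum.inl) ∧ IsJordanChain g b (C ∘ Sum.inr) := by
  simp [LinearMap.toMatrix_eq_iff, IsJordanChain, Sum.forall, Fintype.sum_sum_type]

end JordanChain

section Wedge

variable {V : Type*} [AddCommGroup V] [Module ℂ V]

@[simp]
theorem coe_wedge (v w : V) :
    (wedge v w : ExteriorAlgebra ℂ V) = ExteriorAlgebra.ι ℂ v * ExteriorAlgebra.ι ℂ w :=
  rfl

theorem wedge_add_left (u u' v : V) : wedge (u + u') v = wedge u v + wedge u' v := by
  ext1; simp [add_mul]

theorem wedge_add_right (u v v' : V) : wedge u (v + v') = wedge u v + wedge u v' := by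
  ext1; simp [mul_add]

theorem wedge_smul_left (a : ℂ) (u v : V) : wedge (a • u) v = a • wedge u v := by
  ext1; simp

theorem wedge_smul_right (a : ℂ) (u v : V) : wedge u (a • v) = a • wedge u v := by
  ext1; simp

@[simp]
theorem wedge_self (v : V) : wedge v v = 0 := by
  ext1; simp

theorem wedge_eq_ιMulti (v w : V) : wedge v w = exteriorPower.ιMulti ℂ 2 ![v, w] := by
  ext1; simp [ExteriorAlgebra.ιMulti_apply]

noncomputable def wedgeₗ : V →ₗ[ℂ] V →ₗ[ℂ] ⋀[ℂ]^2 V :=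
  LinearMap.mk₂ ℂ wedge wedge_add_left wedge_smul_left wedge_add_right wedge_smul_right

@[simp]
theorem wedgeₗ_apply (v w : V) : wedgeₗ v w = wedge v w := rfl

end Wedge

section ExteriorSquare

variable {V : Type*} [AddCommGroup V] [Module ℂ V] {f : V →ₗ[ℂ] V}
  {g : (⋀[ℂ]^2 V) →ₗ[ℂ] (⋀[ℂ]^2 V)}

theorem IsJordanChain.wedge_right (hg : ∀ v w : V, g (wedge v w) = wedge (f v) (f w))
    {a : ℂ} {n : ℕ} {v : Fin n → V} (hv : IsJordanChain f a v) {u : V} (hu : f u = u) :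
    IsJordanChain g a fun i => wedge (v i) u := by
  intro j
  rw [hg, hv j, hu, ← wedgeₗ_apply, map_sum, LinearMap.sum_apply]
  simp

/-- Solving `(⋀²f - a²) x₁ = x₀`, `(⋀²f - a²) x₂ = x₁` inside `⋀² span v` and rescaling by `a³`
so that no inverse of `a` appears. -/
noncomputable def wedgeSquareChain (v : Fin 3 → V) (a : ℂ) : Fin 3 → ⋀[ℂ]^2 V :=
  ![a ^ 3 • wedge (v 0) (v 1), a ^ 2 • wedge (v 0) (v 2), a • wedge (v 1) (v 2) - wedge (v 0) (v 2)]

theorem IsJordanChain.wedgeSquareChain (hg : ∀ v w : V, g (wedge v w) = wedge (f v) (f w))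
    {a : ℂ} {v : Fin 3 → V} (hv : IsJordanChain f a v) :
    IsJordanChain g (a ^ 2) (wedgeSquareChain v a) := by
  obtain ⟨h0, h1, h2⟩ := (isJordanChain_three_iff f a v).mp hv
  refine (isJordanChain_three_iff g _ _).mpr ⟨?_, ?_, ?_⟩ <;>
  · simp only [_root_.wedgeSquareChain, Matrix.cons_val_zero, Matrix.cons_val_one,
      Matrix.cons_val_two, Matrix.tail_cons, Matrix.head_cons, map_sub, map_smul, hg, h0, h1, h2,
      wedge_add_left, wedge_add_right, wedge_smul_left, wedge_smul_right, wedge_self, smul_zero,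
      zero_add]
    match_scalars <;> ring

end ExteriorSquare

section Coordinates

variable {V : Type*} [AddCommGroup V] [Module ℂ V] {I : Type*} [DecidableEq I]

noncomputable def Module.Basis.wedgeCoord (B : Module.Basis I ℂ V) (p q : I) :
    Module.Dual ℂ (⋀[ℂ]^2 V) :=
  exteriorPower.pairingDual ℂ V 2 (exteriorPower.ιMulti ℂ 2 ![B.coord p, B.coord q])

theorem Module.Basis.wedgeCoord_wedge_basis (B : Module.Basis I ℂ V) (p q x y : I) :
    B.wedgeCoord p q (wedge (B x) (B y)) =
      (if x = p ∧ y = q then 1 else 0) - (if x = q ∧ y = p then 1 else 0) := by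
  simp [wedgeCoord, wedge_eq_ιMulti, Matrix.det_fin_two, Finsupp.single_apply, ← ite_and,
    and_comm]

end Coordinates

theorem linearIndependent_sumElim_wedge_wedgeSquareChain {V : Type*} [AddCommGroup V]
    [Module ℂ V]    (B : Module.Basis (Fin 3 ⊕ Fin 1) ℂ V) {a : ℂ} (ha : a ≠ 0) :
    LinearIndependent ℂ (Sum.elim (fun i => wedge (B (.inl i)) (B (.inr 0)))
      (wedgeSquareChain (B ∘ Sum.inl) a)) := by
  set W := Sum.elim (fun i => wedge (B (.inl i)) (B (.inr 0))) (wedgeSquareChain (B ∘ Sum.inl) a)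
  refine Fintype.linearIndependent_iff.mpr fun c hc => ?_
  have hcoord (p q) : ∑ k, c k * B.wedgeCoord p q (W k) = 0 := by
    simpa using congrArg (B.wedgeCoord p q) hc
  have h03 := hcoord (.inl 0) (.inr 0)
  have h13 := hcoord (.inl 1) (.inr 0)
  have h23 := hcoord (.inl 2) (.inr 0)
  have h01 := hcoord (.inl 0) (.inl 1)
  have h02 := hcoord (.inl 0) (.inl 2)
  have h12 := hcoord (.inl 1) (.inl 2)
  simp [W, Fintype.sum_sum_type, Fin.sum_univ_three, wedgeSquareChain,
    Module.Basis.wedgeCoord_wedge_basis, ha] at h03 h13 h23 h01 h02 h12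
  have h02' : c (.inr 1) = 0 := by simpa [h12, ha] using h02
  rintro (i | i) <;> fin_cases i <;> assumption

/-- Let `ω ∈ ℂ` be a primitive third root of unity. If the matrix of the endomorphism `f` of the 4-dimensional ℂ-vector space `V` in some basis is diag(J(ω,3), J(1,1)), then in some basis of the 6-dimensional space ⋀²V the induced endomorphism ⋀²f (characterized by `v ∧ w ↦ f v ∧ f w`) has matrix diag(J(ω,3), J(ω⁻¹,3)). -/
theorem exterior_square_jordan_Jw3_J1 (V : Type*) [AddCommGroup V] [Module ℂ V]
    (hdim : Module.finrank ℂ V = 4)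
    (ω : ℂ) (hω : IsPrimitiveRoot ω 3)
    (f : V →ₗ[ℂ] V)
    (B : Module.Basis (Fin 3 ⊕ Fin 1) ℂ V)
    (hB : LinearMap.toMatrix B B f = Matrix.fromBlocks (jordanBlock ω 3) 0 0 (jordanBlock 1 1))
    (g : (⋀[ℂ]^2 V) →ₗ[ℂ] (⋀[ℂ]^2 V))
    (hg : ∀ v w : V, g (wedge v w) = wedge (f v) (f w)) :
    ∃ C : Module.Basis (Fin 3 ⊕ Fin 3) ℂ (⋀[ℂ]^2 V),
      LinearMap.toMatrix C C g = Matrix.fromBlocks (jordanBlock ω 3) 0 0 (jordanBlock ω⁻¹ 3) := by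
  obtain ⟨hchain, hfixed⟩ := (LinearMap.toMatrix_eq_fromBlocks_jordanBlock_iff B f ω 1).mp hB
  rw [isJordanChain_one_iff, one_smul] at hfixed
  have : Module.Finite ℂ V := Module.finite_of_finrank_eq_succ hdim
  have hcard : Fintype.card (Fin 3 ⊕ Fin 3) = Module.finrank ℂ (⋀[ℂ]^2 V) := by
    rw [exteriorPower.finrank_eq, hdim]
    rfl
  have hinv : ω⁻¹ = ω ^ 2 := inv_eq_of_mul_eq_one_right (by rw [← pow_succ', hω.pow_eq_one])
  have hω0 : ω ≠ 0 := hω.ne_zero three_ne_zero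
  let C := basisOfLinearIndependentOfCardEqFinrank
    (linearIndependent_sumElim_wedge_wedgeSquareChain B hω0) hcard
  refine ⟨C, (LinearMap.toMatrix_eq_fromBlocks_jordanBlock_iff C g ω ω⁻¹).mpr ⟨?_, ?_⟩⟩
  · simpa [C] using hchain.wedge_right hg hfixed
  · simpa [C, hinv] using hchain.wedgeSquareChain hg
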